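/- Let G₁ and G₂ be connected simple graphs, each on n vertices with m edges, with signless Laplacian spectra μ⁺₁ ≥ ⋯ ≥ μ⁺_n > 0 and λ⁺₁ ≥ ⋯ ≥ λ⁺_n > 0 respectively (so all signless Laplacian eigenvalues are positive). If p is a positive integer such that 2m/(p+n) < min(μ⁺_n, λ⁺_n), then LE⁺(G₁ ∪ K̄_p) = LE⁺(G₂ ∪ K̄_p). -/

import Mathlib

open SimpleGraph Matrix Finset

/-- The number of edges of a simple graph. -/
noncomputable def edgeCount {V : Type*} (G : SimpleGraph V) : ℕ := G.edgeSet.ncard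

/-- The Laplacian spectrum of a finite simple graph, as a multiset of real numbers. -/
noncomputable def lapSpec {V : Type*} [Fintype V] (G : SimpleGraph V) : Multiset ℝ := by
  classical
  exact Finset.univ.val.map (G.posSemidef_lapMatrix ℝ).1.eigenvalues

/-- The signless Laplacian matrix `D + A` is Hermitian. -/
theorem signless_isHermitian {V : Type*} [Fintype V] [DecidableEq V] (G : SimpleGraph V)
    [DecidableRel G.Adj] : (G.degMatrix ℝ + G.adjMatrix ℝ).IsHermitian := by
  rw [Matrix.IsHermitian, conjTranspose_eq_transpose_of_trivial]
  exact Matrix.IsSymm.add (isSymm_degMatrix (R := ℝ) (G := G)) (isSymm_adjMatrix G)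

/-- The signless Laplacian spectrum of a finite simple graph, as a multiset of reals. -/
noncomputable def signlessLapSpec {V : Type*} [Fintype V] (G : SimpleGraph V) : Multiset ℝ := by
  classical
  exact Finset.univ.val.map (signless_isHermitian G).eigenvalues

/-- The Laplacian energy `LE(G) = ∑ |μ_i - 2m/n|`. -/
noncomputable def lapEnergy {V : Type*} [Fintype V] (G : SimpleGraph V) : ℝ :=
  ((lapSpec G).map (fun x => |x - 2 * (edgeCount G : ℝ) / (Fintype.card V : ℝ)|)).sum

/-- The signless Laplacian energy `LE⁺(G) = ∑ |μ⁺_i - 2m/n|`. -/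
noncomputable def signlessLapEnergy {V : Type*} [Fintype V] (G : SimpleGraph V) : ℝ :=
  ((signlessLapSpec G).map (fun x => |x - 2 * (edgeCount G : ℝ) / (Fintype.card V : ℝ)|)).sum

/-- The join `G ∨ H` of two graphs: disjoint union plus all edges between them. -/
def SimpleGraph.join {V W : Type*} (G : SimpleGraph V) (H : SimpleGraph W) :
    SimpleGraph (V ⊕ W) where
  Adj a b :=
    match a, b with
    | Sum.inl u, Sum.inl v => G.Adj u v
    | Sum.inr u, Sum.inr v => H.Adj u v
    | Sum.inl _, Sum.inr _ => True
    | Sum.inr _, Sum.inl _ => True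
  symm := ⟨by rintro (u | u) (v | v) h <;> simp_all [adj_comm]⟩
  loopless := ⟨by rintro (u | u) h <;> simp_all⟩

/-- The tensor (Kronecker) product `G ⊗ H` of two graphs. -/
def SimpleGraph.tensorProd {V W : Type*} (G : SimpleGraph V) (H : SimpleGraph W) :
    SimpleGraph (V × W) where
  Adj a b := G.Adj a.1 b.1 ∧ H.Adj a.2 b.2
  symm := ⟨fun a b h => ⟨h.1.symm, h.2.symm⟩⟩
  loopless := ⟨fun a h => G.irrefl h.1⟩

/-! The signless Laplacian of `G ∪ K̄_p` is block diagonal with blocks `Q(G)` and `0`, so its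
spectrum is that of `G` together with `p` zeros, while the average degree drops to
`c = 2m/(n+p)`. If every eigenvalue of `G` is at least `c`, all absolute values in `LE⁺` resolve,
and since the eigenvalues of `G` sum to `tr Q(G) = 2m` we get
`LE⁺(G ∪ K̄_p) = (2m - n c) + p c`, which depends only on `n`, `m` and `p`. -/

section

variable {V W : Type*} [Fintype V] [Fintype W]

theorem signlessLapSpec_eq_roots_charpoly [DecidableEq V] (G : SimpleGraph V)
    [DecidableRel G.Adj] :
    signlessLapSpec G = (G.degMatrix ℝ + G.adjMatrix ℝ).charpoly.roots := by
  have : signlessLapSpec G = univ.val.map (signless_isHermitian G).eigenvalues := by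
    unfold signlessLapSpec
    congr!
  rw [this, (signless_isHermitian G).roots_charpoly_eq_eigenvalues]
  rfl

theorem card_signlessLapSpec (G : SimpleGraph V) :
    Multiset.card (signlessLapSpec G) = Fintype.card V := by
  simp [signlessLapSpec]

theorem trace_signlessLap [DecidableEq V] (G : SimpleGraph V) [DecidableRel G.Adj] :
    (G.degMatrix ℝ + G.adjMatrix ℝ).trace = 2 * edgeCount G := by
  rw [trace_add, trace_adjMatrix, add_zero, degMatrix, trace_diagonal, edgeCount,
    Set.ncard_eq_toFinset_card', ← edgeFinset]
  exact_mod_cast G.sum_degrees_eq_twice_card_edges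

theorem sum_signlessLapSpec (G : SimpleGraph V) :
    (signlessLapSpec G).sum = 2 * edgeCount G := by
  classical
  rw [signlessLapSpec_eq_roots_charpoly, ← trace_eq_sum_roots_charpoly_of_splits
    (signless_isHermitian G).splits_charpoly, trace_signlessLap]

theorem degree_sum_inl (G : SimpleGraph V) (H : SimpleGraph W) [DecidableRel G.Adj]
    [DecidableRel (G ⊕g H).Adj] (v : V) : (G ⊕g H).degree (.inl v) = G.degree v := by
  rw [← card_neighborSet_eq_degree, ← card_neighborSet_eq_degree, ← Nat.card_eq_fintype_card,
    ← Nat.card_eq_fintype_card, neighborSet_sum_inl,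
    Nat.card_image_of_injective Sum.inl_injective]

theorem degree_sum_inr (G : SimpleGraph V) (H : SimpleGraph W) [DecidableRel H.Adj]
    [DecidableRel (G ⊕g H).Adj] (w : W) : (G ⊕g H).degree (.inr w) = H.degree w := by
  rw [← card_neighborSet_eq_degree, ← card_neighborSet_eq_degree, ← Nat.card_eq_fintype_card,
    ← Nat.card_eq_fintype_card, neighborSet_sum_inr,
    Nat.card_image_of_injective Sum.inr_injective]

theorem signlessLap_sum [DecidableEq V] [DecidableEq W] (G : SimpleGraph V) (H : SimpleGraph W)
    [DecidableRel G.Adj] [DecidableRel H.Adj] [DecidableRel (G ⊕g H).Adj] :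
    (G ⊕g H).degMatrix ℝ + (G ⊕g H).adjMatrix ℝ =
      fromBlocks (G.degMatrix ℝ + G.adjMatrix ℝ) 0 0 (H.degMatrix ℝ + H.adjMatrix ℝ) := by
  ext (v | w) (v' | w') <;> simp [degMatrix, diagonal, degree_sum_inl, degree_sum_inr]

theorem signlessLapSpec_sum (G : SimpleGraph V) (H : SimpleGraph W) :
    signlessLapSpec (G ⊕g H) = signlessLapSpec G + signlessLapSpec H := by
  classical
  rw [signlessLapSpec_eq_roots_charpoly, signlessLapSpec_eq_roots_charpoly,
    signlessLapSpec_eq_roots_charpoly, signlessLap_sum, charpoly_fromBlocks_zero₁₂,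
    Polynomial.roots_mul ((charpoly_monic _).mul (charpoly_monic _)).ne_zero]

theorem signlessLapSpec_bot :
    signlessLapSpec (⊥ : SimpleGraph W) = Multiset.replicate (Fintype.card W) 0 := by
  classical
  have hQ : (⊥ : SimpleGraph W).degMatrix ℝ + (⊥ : SimpleGraph W).adjMatrix ℝ = 0 := by
    ext v w
    simp [degMatrix]
  rw [signlessLapSpec_eq_roots_charpoly, hQ, charpoly_zero, Polynomial.roots_X_pow,
    Multiset.nsmul_singleton]

theorem edgeCount_sum (G : SimpleGraph V) (H : SimpleGraph W) :
    edgeCount (G ⊕g H) = edgeCount G + edgeCount H := by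
  simp only [edgeCount, ← Nat.card_coe_set_eq, Nat.card_congr (edgeSetSumEquiv (G := G) (H := H)),
    Nat.card_sum]

theorem edgeCount_bot {U : Type*} : edgeCount (⊥ : SimpleGraph U) = 0 := by
  rw [edgeCount, edgeSet_bot, Set.ncard_empty]

theorem signlessLapEnergy_sum_bot (G : SimpleGraph V)
    (h : ∀ x ∈ signlessLapSpec G,
      2 * (edgeCount G : ℝ) / (Fintype.card V + Fintype.card W) ≤ x) :
    signlessLapEnergy (G ⊕g (⊥ : SimpleGraph W)) =
      2 * edgeCount G - (Fintype.card V - Fintype.card W) *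
        (2 * (edgeCount G : ℝ) / (Fintype.card V + Fintype.card W)) := by
  set c := 2 * (edgeCount G : ℝ) / (Fintype.card V + Fintype.card W)
  have hc : 0 ≤ c := by positivity
  have hG : ((signlessLapSpec G).map fun x => |x - c|).sum =
      2 * edgeCount G - Fintype.card V * c := by
    rw [Multiset.map_congr rfl fun x hx => abs_of_nonneg (sub_nonneg.2 (h x hx)),
      Multiset.sum_map_sub, Multiset.map_id', sum_signlessLapSpec, Multiset.map_const',
      Multiset.sum_replicate, card_signlessLapSpec, nsmul_eq_mul]
  rw [signlessLapEnergy, signlessLapSpec_sum, signlessLapSpec_bot, edgeCount_sum, edgeCount_bot,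
    add_zero, Fintype.card_sum, Nat.cast_add, Multiset.map_add, Multiset.sum_add, hG,
    Multiset.map_replicate, Multiset.sum_replicate, zero_sub, abs_neg, abs_of_nonneg hc,
    nsmul_eq_mul]
  ring

end

theorem le_of_mem_map_univ_of_antitone {n : ℕ} {μ : Fin n → ℝ} (hμ : Antitone μ)
    (hn : 1 ≤ n) {x : ℝ} (hx : x ∈ univ.val.map μ) : μ ⟨n - 1, by omega⟩ ≤ x := by
  obtain ⟨i, -, rfl⟩ := Multiset.mem_map.1 hx
  exact hμ (Fin.mk_le_mk.2 (by omega))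

theorem stmt1 (n m p : ℕ) (hn : 1 ≤ n)
    (G₁ G₂ : SimpleGraph (Fin n))
    (hm₁ : edgeCount G₁ = m) (hm₂ : edgeCount G₂ = m)
    (μ ν : Fin n → ℝ) (hμmono : Antitone μ) (hνmono : Antitone ν)
    (hμspec : signlessLapSpec G₁ = Finset.univ.val.map μ)
    (hνspec : signlessLapSpec G₂ = Finset.univ.val.map ν)
    (hcond : 2 * (m : ℝ) / ((p : ℝ) + (n : ℝ)) < min (μ ⟨n - 1, by omega⟩) (ν ⟨n - 1, by omega⟩)) :
    signlessLapEnergy (G₁ ⊕g (⊥ : SimpleGraph (Fin p))) = signlessLapEnergy (G₂ ⊕g (⊥ : SimpleGraph (Fin p))) := by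
  rw [add_comm] at hcond
  have hμ : ∀ x ∈ signlessLapSpec G₁,
      2 * (edgeCount G₁ : ℝ) / (Fintype.card (Fin n) + Fintype.card (Fin p)) ≤ x := by
    rw [hμspec, hm₁, Fintype.card_fin, Fintype.card_fin]
    exact fun x hx => (hcond.trans_le (min_le_left _ _)).le.trans
      (le_of_mem_map_univ_of_antitone hμmono hn hx)
  have hν : ∀ x ∈ signlessLapSpec G₂,
      2 * (edgeCount G₂ : ℝ) / (Fintype.card (Fin n) + Fintype.card (Fin p)) ≤ x := by
    rw [hνspec, hm₂, Fintype.card_fin, Fintype.card_fin]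
    exact fun x hx => (hcond.trans_le (min_le_right _ _)).le.trans
      (le_of_mem_map_univ_of_antitone hνmono hn hx)
  rw [signlessLapEnergy_sum_bot G₁ hμ, signlessLapEnergy_sum_bot G₂ hν, hm₁, hm₂]
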